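/- For all n ≥ 0, the number of words w of length n over {1,2} such that 1w is Knuth-equivalent to w1 equals the central binomial coefficient C(n, ⌊n/2⌋). -/

import Mathlib

namespace Plactic

/-- Insert `x` into a weakly increasing row, returning the new row and the bumped entry. -/
def rowInsert (x : ℕ) : List ℕ → List ℕ × Option ℕ
  | [] => ([x], none)
  | y :: ys =>
    if x < y then (x :: ys, some y)
    else
      let p := rowInsert x ys
      (y :: p.1, p.2)

/-- RSK insertion of `x` into a tableau given as a list of rows. -/
def tInsert (x : ℕ) : List (List ℕ) → List (List ℕ)
  | [] => [[x]]
  | r :: rs =>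
    match rowInsert x r with
    | (r', none) => r' :: rs
    | (r', some y) => r' :: tInsert y rs

/-- The RSK insertion tableau of a word. -/
def P (w : List ℕ) : List (List ℕ) := w.foldl (fun t x => tInsert x t) []

/-- The `i`-th row (0-indexed) of the insertion tableau of `w`. -/
def row (w : List ℕ) (i : ℕ) : List ℕ := (P w).getD i []

/-- The `j`-th column (0-indexed) of a tableau, read top to bottom. -/
def col (T : List (List ℕ)) (j : ℕ) : List ℕ := T.filterMap (fun r => r[j]?)

/-- An elementary Knuth transposition. -/
inductive KStep : List ℕ → List ℕ → Prop
  | k1 (x y : List ℕ) (a b c : ℕ) : a ≤ b → b < c →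
      KStep (x ++ [a, c, b] ++ y) (x ++ [c, a, b] ++ y)
  | k2 (x y : List ℕ) (a b c : ℕ) : a < b → b ≤ c →
      KStep (x ++ [b, a, c] ++ y) (x ++ [b, c, a] ++ y)

/-- Knuth equivalence: the equivalence relation generated by Knuth transpositions. -/
def KEquiv : List ℕ → List ℕ → Prop := Relation.EqvGen KStep

/-- The centralizer of `u` in the plactic monoid. -/
def Cent (u : List ℕ) : Set (List ℕ) := {w | KEquiv (u ++ w) (w ++ u)}

end Plactic

/-!
Pair each `1` of a word over `{1, 2}` with the nearest unpaired `2` to its left. The number of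
`2`s left unpaired is invariant under Knuth moves, and together with the content it determines the
Knuth class: every such word is Knuth-equivalent to the reading word `2^a 1^b 2^c` of a two-row
tableau, with `c` the number of unpaired `2`s. Prepending `1` does not change this number, while
appending `1` lowers it when it is positive; so `1w ≡ w1` exactly when no `2` of `w` is unpaired,
i.e. when `w` is a Yamanouchi word.

Splitting by the last letter, the number of words of length `n` with at most `k` unpaired `2`s
satisfies the ballot recursion `N(n+1, k) = N(n, k+1) + N(n, k-1)` (with `N(n, -1) = 0`). By
Pascal's rule, so does the sum of the `k+1` binomial coefficients `C(n, m)` nearest the middle,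
which for `k = 0` is `C(n, ⌊n/2⌋)`.
-/

namespace Plactic

open List

local infix:50 " ≈ₖ " => KEquiv

theorem kequiv_equivalence : Equivalence KEquiv := Relation.EqvGen.is_equivalence KStep

instance : Trans KEquiv KEquiv KEquiv := ⟨kequiv_equivalence.trans⟩

theorem KEquiv.symm {u v : List ℕ} (h : u ≈ₖ v) : v ≈ₖ u := kequiv_equivalence.symm h

theorem KEquiv.of_kStep {u v : List ℕ} (h : KStep u v) : u ≈ₖ v := Relation.EqvGen.rel _ _ h

theorem KStep.append_append {u v : List ℕ} (p q : List ℕ) (h : KStep u v) :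
    KStep (p ++ u ++ q) (p ++ v ++ q) := by
  cases h with
  | k1 x y a b c hab hbc => simpa using KStep.k1 (p ++ x) (y ++ q) a b c hab hbc
  | k2 x y a b c hab hbc => simpa using KStep.k2 (p ++ x) (y ++ q) a b c hab hbc

theorem KEquiv.append_append {u v : List ℕ} (p q : List ℕ) (h : u ≈ₖ v) :
    p ++ u ++ q ≈ₖ p ++ v ++ q := by
  induction h with
  | rel u v h => exact .of_kStep (h.append_append p q)
  | refl u => exact kequiv_equivalence.refl _
  | symm u v _ ih => exact ih.symm
  | trans u v w _ _ ih₁ ih₂ => exact kequiv_equivalence.trans ih₁ ih₂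

theorem KEquiv.append_right {u v : List ℕ} (q : List ℕ) (h : u ≈ₖ v) :
    u ++ q ≈ₖ v ++ q := by
  simpa using h.append_append [] q

def unpairedStep (d x : ℕ) : ℕ := if x = 2 then d + 1 else if x = 1 then d - 1 else d

/-- Reading left to right, each `1` is paired with the nearest unpaired `2` before it
(other letters are ignored). -/
def unpairedTwos (w : List ℕ) : ℕ := w.foldl unpairedStep 0

@[simp] theorem unpairedTwos_nil : unpairedTwos [] = 0 := rfl

@[simp] theorem unpairedTwos_append_singleton (w : List ℕ) (x : ℕ) :
    unpairedTwos (w ++ [x]) = unpairedStep (unpairedTwos w) x := by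
  simp [unpairedTwos]

@[simp] theorem unpairedTwos_cons_one (w : List ℕ) : unpairedTwos (1 :: w) = unpairedTwos w := rfl

theorem unpairedTwos_eq_of_kStep {u v : List ℕ} (h : KStep u v) :
    unpairedTwos u = unpairedTwos v := by
  cases h with
  | k1 x y a b c hab hbc | k2 x y a b c hab hbc =>
    simp only [unpairedTwos, foldl_append]
    congr 1
    simp only [foldl_cons, foldl_nil, unpairedStep]
    split_ifs <;> omega

theorem unpairedTwos_eq_of_kequiv {u v : List ℕ} (h : u ≈ₖ v) :
    unpairedTwos u = unpairedTwos v := by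
  induction h with
  | rel u v h => exact unpairedTwos_eq_of_kStep h
  | refl u => rfl
  | symm u v _ ih => exact ih.symm
  | trans u v w _ _ ih₁ ih₂ => exact ih₁.trans ih₂

theorem kequiv_replicate_two_append_one (b : ℕ) :
    replicate (b + 1) 2 ++ [1] ≈ₖ 2 :: 1 :: replicate b 2 := by
  induction b with
  | zero => exact kequiv_equivalence.refl _
  | succ b ih =>
    calc replicate (b + 2) 2 ++ [1] = replicate b 2 ++ [2, 2, 1] ++ [] := by
          simp [replicate_add]
      _ ≈ₖ replicate b 2 ++ [2, 1, 2] ++ [] :=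
          (KEquiv.of_kStep (.k2 _ _ 1 2 2 (by omega) le_rfl)).symm
      _ = (replicate (b + 1) 2 ++ [1]) ++ [2] := by simp [replicate_succ']
      _ ≈ₖ (2 :: 1 :: replicate b 2) ++ [2] := ih.append_right _
      _ = 2 :: 1 :: replicate (b + 1) 2 := by simp [replicate_succ']

theorem kequiv_replicate_one_append_two_one (a : ℕ) :
    replicate a 1 ++ [2, 1] ≈ₖ 2 :: replicate (a + 1) 1 := by
  induction a with
  | zero => exact kequiv_equivalence.refl _
  | succ a ih =>
    calc replicate (a + 1) 1 ++ [2, 1] = replicate a 1 ++ [1, 2, 1] ++ [] := by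
          simp [replicate_succ']
      _ ≈ₖ replicate a 1 ++ [2, 1, 1] ++ [] := .of_kStep (.k1 _ _ 1 1 2 le_rfl (by omega))
      _ = (replicate a 1 ++ [2, 1]) ++ [1] := by simp
      _ ≈ₖ (2 :: replicate (a + 1) 1) ++ [1] := ih.append_right _
      _ = 2 :: replicate (a + 2) 1 := by simp [replicate_succ']

/-- The row reading word of the two-row tableau with rows `1^b 2^c` and `2^a`. -/
def rowWord (a b c : ℕ) : List ℕ := replicate a 2 ++ replicate b 1 ++ replicate c 2

theorem rowWord_succ_append_one (a b c : ℕ) :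
    rowWord a b (c + 1) ++ [1] ≈ₖ rowWord (a + 1) (b + 1) c := by
  calc rowWord a b (c + 1) ++ [1]
        = (replicate a 2 ++ replicate b 1) ++ (replicate (c + 1) 2 ++ [1]) ++ [] := by
          simp [rowWord]
      _ ≈ₖ (replicate a 2 ++ replicate b 1) ++ (2 :: 1 :: replicate c 2) ++ [] :=
          (kequiv_replicate_two_append_one c).append_append _ _
      _ = replicate a 2 ++ (replicate b 1 ++ [2, 1]) ++ replicate c 2 := by simp
      _ ≈ₖ replicate a 2 ++ (2 :: replicate (b + 1) 1) ++ replicate c 2 :=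
          (kequiv_replicate_one_append_two_one b).append_append _ _
      _ = rowWord (a + 1) (b + 1) c := by simp [rowWord, replicate_succ']

theorem exists_kequiv_rowWord {w : List ℕ} (hw : ∀ x ∈ w, x = 1 ∨ x = 2) :
    ∃ a, a + unpairedTwos w = w.count 2 ∧ w ≈ₖ rowWord a (w.count 1) (unpairedTwos w) := by
  induction w using List.reverseRecOn with
  | nil => exact ⟨0, rfl, kequiv_equivalence.refl _⟩
  | append_singleton v x ih =>
    obtain ⟨a, ha, hv⟩ := ih fun y hy => hw y (by simp [hy])
    have hvx := hv.append_right [x]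
    rcases hw x (by simp) with rfl | rfl
    · rcases h : unpairedTwos v with _ | c
      · refine ⟨a, by grind [unpairedStep, unpairedTwos_append_singleton], ?_⟩
        simpa [h, unpairedStep, rowWord, replicate_succ'] using hvx
      · refine ⟨a + 1, by grind [unpairedStep, unpairedTwos_append_singleton], ?_⟩
        simpa [h, unpairedStep] using
          kequiv_equivalence.trans (h ▸ hvx) (rowWord_succ_append_one a _ c)
    · refine ⟨a, by grind [unpairedStep, unpairedTwos_append_singleton], ?_⟩
      simpa [unpairedStep, rowWord, replicate_succ'] using hvx

theorem kequiv_of_count_eq {u v : List ℕ} (hu : ∀ x ∈ u, x = 1 ∨ x = 2)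
    (hv : ∀ x ∈ v, x = 1 ∨ x = 2) (h₁ : u.count 1 = v.count 1) (h₂ : u.count 2 = v.count 2)
    (h : unpairedTwos u = unpairedTwos v) : u ≈ₖ v := by
  obtain ⟨a, ha, hu⟩ := exists_kequiv_rowWord hu
  obtain ⟨b, hb, hv⟩ := exists_kequiv_rowWord hv
  obtain rfl : a = b := by omega
  rw [h₁, h] at hu
  exact kequiv_equivalence.trans hu hv.symm

theorem mem_cent_one_iff {w : List ℕ} (hw : ∀ x ∈ w, x = 1 ∨ x = 2) :
    w ∈ Cent [1] ↔ unpairedTwos w = 0 := by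
  constructor
  · intro h
    have key : unpairedTwos w = unpairedTwos w - 1 := by
      simpa [unpairedStep] using unpairedTwos_eq_of_kequiv h
    omega
  · intro h
    refine kequiv_of_count_eq ?_ ?_ (by simp) (by simp) (by simp [h, unpairedStep])
    · simpa [or_imp, forall_and] using hw
    · simpa [or_imp, forall_and] using hw

def words : ℕ → Finset (List ℕ)
  | 0 => {[]}
  | n + 1 => (words n).image (· ++ [1]) ∪ (words n).image (· ++ [2])

theorem mem_words {n : ℕ} {w : List ℕ} :
    w ∈ words n ↔ w.length = n ∧ ∀ x ∈ w, x = 1 ∨ x = 2 := by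
  induction n generalizing w with
  | zero => simp +contextual [words]
  | succ n ih =>
    rcases w.eq_nil_or_concat' with rfl | ⟨v, x, rfl⟩
    · simp [words]
    · simp only [words, Finset.mem_union, Finset.mem_image, ih, append_singleton_inj, length_append,
        forall_mem_append, forall_mem_singleton]
      grind

theorem card_filter_words_succ (n : ℕ) (p : ℕ → Prop) [DecidablePred p] :
    ((words (n + 1)).filter (p <| unpairedTwos ·)).card =
      ((words n).filter (p <| unpairedTwos · - 1)).card +
        ((words n).filter (p <| unpairedTwos · + 1)).card := by
  rw [words, Finset.filter_union, Finset.card_union_of_disjoint, Finset.filter_image,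
    Finset.filter_image, Finset.card_image_of_injective _ (append_left_injective _),
    Finset.card_image_of_injective _ (append_left_injective _)]
  · simp [unpairedStep]
  · simp [Finset.disjoint_left]

/-- `Nat.choose` extended by zero to negative lower indices, so that Pascal's rule holds
for every integer index. -/
def chooseInt (n : ℕ) (m : ℤ) : ℕ := if m < 0 then 0 else n.choose m.toNat

theorem chooseInt_succ_succ (n : ℕ) (m : ℤ) :
    chooseInt (n + 1) (m + 1) = chooseInt n m + chooseInt n (m + 1) := by
  rcases lt_trichotomy m (-1) with hm | rfl | hm
  · simp [chooseInt, show m < 0 by omega, show m + 1 < 0 by omega]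
  · simp [chooseInt]
  · obtain ⟨k, rfl⟩ := Int.eq_ofNat_of_zero_le (show 0 ≤ m by omega)
    simp [chooseInt, show ¬ (k : ℤ) + 1 < 0 by omega, show ((k : ℤ) + 1).toNat = k + 1 by omega,
      Nat.choose_succ_succ']

theorem chooseInt_zero_left {m : ℤ} (hm : m ≠ 0) : chooseInt 0 m = 0 := by
  unfold chooseInt
  split_ifs
  · rfl
  · exact Nat.choose_eq_zero_of_lt (by omega)

/-- The sum of the `h + 1` consecutive binomial coefficients `C(n, m)` with
`⌊(n - h) / 2⌋ ≤ m ≤ ⌊(n + h) / 2⌋`. -/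
def middleChooseSum (n h : ℕ) : ℕ :=
  ∑ i ∈ Finset.range (h + 1), chooseInt n (((n : ℤ) - h) / 2 + i)

theorem middleChooseSum_zero_left (h : ℕ) : middleChooseSum 0 h = 1 := by
  rw [middleChooseSum, Finset.sum_eq_single_of_mem ((h + 1) / 2) (by simp; omega)]
  · rw [show ((0 : ℕ) - (h : ℤ)) / 2 + ((h + 1) / 2 : ℕ) = 0 by omega]
    rfl
  · intro i _ hi
    exact chooseInt_zero_left (by omega)

theorem middleChooseSum_zero_right (n : ℕ) : middleChooseSum n 0 = n.choose (n / 2) := by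
  rw [middleChooseSum, Finset.sum_range_one, chooseInt, if_neg (by omega)]
  congr

theorem middleChooseSum_succ_zero (n : ℕ) : middleChooseSum (n + 1) 0 = middleChooseSum n 1 := by
  simp only [middleChooseSum, Finset.sum_range_succ, Finset.sum_range_zero, zero_add]
  rw [show ((n + 1 : ℕ) - ((0 : ℕ) : ℤ)) / 2 + ((0 : ℕ) : ℤ) = ((n : ℤ) - 1) / 2 + 1 by omega,
    chooseInt_succ_succ]
  simp

theorem middleChooseSum_succ_succ (n h : ℕ) :
    middleChooseSum (n + 1) (h + 1) = middleChooseSum n (h + 2) + middleChooseSum n h := by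
  obtain ⟨L, hL⟩ : ∃ L : ℤ, ((n : ℤ) - h) / 2 = L := ⟨_, rfl⟩
  have h₁ : ∀ i : ℕ, ((n + 1 : ℕ) - ((h + 1 : ℕ) : ℤ)) / 2 + i = (L - 1 + i) + 1 := by
    intro i; omega
  have h₂ : ∀ i : ℕ, ((n : ℤ) - ((h + 2 : ℕ) : ℤ)) / 2 + i = L - 1 + i := by
    intro i; omega
  have h₃ : ∀ i : ℕ, L - 1 + i + 1 = L + i := by
    intro i; ring
  simp only [middleChooseSum, h₁, h₂, hL]
  simp only [chooseInt_succ_succ, Finset.sum_add_distrib]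
  simp only [h₃]
  rw [Finset.sum_range_succ (fun i : ℕ => chooseInt n (L - 1 + i)) (h + 2),
    Finset.sum_range_succ (fun i : ℕ => chooseInt n (L + i)) (h + 1),
    show L - 1 + ((h + 2 : ℕ) : ℤ) = L + ((h + 1 : ℕ) : ℤ) by push_cast; ring]
  rw [show h + 1 + 1 = h + 2 from rfl]
  omega

theorem card_filter_unpairedTwos_le (n k : ℕ) :
    ((words n).filter (unpairedTwos · ≤ k)).card = middleChooseSum n k := by
  induction n generalizing k with
  | zero => simp [words, Finset.filter_singleton, middleChooseSum_zero_left]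
  | succ n ih =>
    rw [card_filter_words_succ n (· ≤ k)]
    cases k with
    | zero =>
      simp only [nonpos_iff_eq_zero, Nat.sub_eq_zero_iff_le, Nat.add_eq_zero_iff, one_ne_zero,
        and_false, Finset.filter_false, Finset.card_empty, add_zero, ih, middleChooseSum_succ_zero]
    | succ k =>
      simp only [Nat.sub_le_iff_le_add, add_le_add_iff_right, middleChooseSum_succ_succ, ← ih]

end Plactic

open Plactic in
theorem stmt_16 (n : ℕ) :
    {w : List ℕ | w.length = n ∧ (∀ x ∈ w, x = 1 ∨ x = 2) ∧ w ∈ Cent [1]}.ncard =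
      Nat.choose n (n / 2) := by
  have hset : {w : List ℕ | w.length = n ∧ (∀ x ∈ w, x = 1 ∨ x = 2) ∧ w ∈ Cent [1]} =
      (words n).filter (unpairedTwos · ≤ 0) := by
    ext w
    simp only [Finset.coe_filter, mem_words, nonpos_iff_eq_zero, and_assoc]
    exact and_congr_right fun _ => and_congr_right mem_cent_one_iff
  rw [hset, Set.ncard_coe_finset, card_filter_unpairedTwos_le, middleChooseSum_zero_right]
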